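/- arXiv:2105.09241 — 3 statements merged into one kernel-verified Lean document; each statement's English description precedes it below -/
import Mathlib

section
/- Assume f satisfies the relative smoothness condition with constants μ_d(f) and L_d(f), let L ≥ L_d(f), let x̄ ∈ int(dom ψ) be one of the points z_1, …, z_m ∈ dom ψ, let δ ≥ 0, let λ̄ ∈ Δ_m satisfy ⟨λ̄ − λ, f_* − Gᵀ x_+⟩ ≤ δ for all λ ∈ Δ_m, where x_+ = y*_L(L∇d(x̄) − Gλ̄). Then for every y ∈ dom ψ: β_d(x_+, y) ≤ β_d(x̄, y) + (1/L)[F(y) − F(x_+) + δ], where F = f + ψ. -/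
/-!
The first-order optimality condition of the prox step defining `x₊`, combined with the
three-point identity for Bregman distances, bounds `L β(x₊, y) + L β(x̄, x₊)` by
`L β(x̄, y) + ⟨Gλ̄, y − x₊⟩ + ψ(y) − ψ(x₊)`. Approximate stationarity of `λ̄`, tested at the
vertex of `Δ_m` that picks `x̄`, bounds the aggregated linear model: `⟨Gλ̄, y − x₊⟩` is at most
`f(y)` (convexity of `f`) minus the linearization of `f` at `x̄` evaluated at `x₊`, plus `δ`.
Relative smoothness and `L ≥ L_d(f)` bound that linearization below by `f(x₊) − L β(x̄, x₊)`.
-/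

open Set

section

variable {E : Type*} [NormedAddCommGroup E] [NormedSpace ℝ E]

noncomputable def bregman (d : E → ℝ) (d' : E → E →L[ℝ] ℝ) (x y : E) : ℝ :=
  d y - d x - d' x (y - x)

theorem bregman_three_point (d : E → ℝ) (d' : E → E →L[ℝ] ℝ) (x z y : E) :
    bregman d d' x y - bregman d d' z y - bregman d d' x z = (d' z - d' x) (y - z) := by
  simp only [bregman, sub_apply, map_sub]
  ring

theorem IsMinOn.hasFDerivAt_apply_sub_add_nonneg {S : Set E} {g ψ : E → ℝ} {g' : E →L[ℝ] ℝ}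
    {x y : E} (hmin : IsMinOn (g + ψ) S x) (hψ : ConvexOn ℝ S ψ) (hg : HasFDerivAt g g' x)
    (hx : x ∈ S) (hy : y ∈ S) : 0 ≤ g' (y - x) + (ψ y - ψ x) := by
  -- restrict to the segment `[x, y]` and replace `ψ` there by its chord, which lies above it
  set k : ℝ → ℝ := fun t => g (x + t • (y - x)) + t * (ψ y - ψ x)
  have hk : HasDerivAt k (g' (y - x) + (ψ y - ψ x)) 0 := by
    have hline : HasDerivAt (fun t : ℝ => x + t • (y - x)) (y - x) 0 := by
      simpa using ((hasDerivAt_id (0 : ℝ)).smul_const (y - x)).const_add x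
    have hg0 : HasFDerivAt g g' (x + (0 : ℝ) • (y - x)) := by simpa using hg
    exact (hg0.comp_hasDerivAt 0 hline).add (hasDerivAt_mul_const (ψ y - ψ x))
  have hkmin : IsMinOn k (Icc 0 1) 0 := by
    intro t ⟨ht0, ht1⟩
    have hxt : x + t • (y - x) = (1 - t) • x + t • y := by module
    have hchord := hψ.2 hx hy (sub_nonneg.2 ht1) ht0 (sub_add_cancel 1 t)
    have hle := hmin (hψ.1.add_smul_sub_mem hx hy ⟨ht0, ht1⟩)
    simp only [Pi.add_apply, smul_eq_mul] at hchord hle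
    simp only [k, mem_ofPred_eq, zero_smul, add_zero, zero_mul, hxt] at hle ⊢
    linarith
  have hone : (1 : ℝ) ∈ posTangentConeAt (Icc 0 1) 0 := by
    simpa using sub_mem_posTangentConeAt_of_segment_subset (segment_eq_Icc zero_le_one).subset
  simpa using hkmin.localize.hasFDerivWithinAt_nonneg hk.hasDerivWithinAt.hasFDerivWithinAt hone

theorem ConvexOn.add_apply_sub_le_of_hasFDerivAt {S : Set E} {f : E → ℝ} {f' : E →L[ℝ] ℝ}
    {x y : E} (hf : ConvexOn ℝ S f) (hfx : HasFDerivAt f f' x) (hx : x ∈ S) (hy : y ∈ S) :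
    f x + f' (y - x) ≤ f y := by
  -- `-f + f = 0` is minimized everywhere
  have hmin : IsMinOn (-f + f) S x := fun v _ => by simp
  have := hmin.hasFDerivAt_apply_sub_add_nonneg hf hfx.neg hx hy
  simp only [neg_apply] at this
  linarith

theorem bregman_nonneg {S : Set E} {d : E → ℝ} {d' : E → E →L[ℝ] ℝ} {x y : E}
    (hd : ConvexOn ℝ S d) (hdx : HasFDerivAt d (d' x) x) (hx : x ∈ S) (hy : y ∈ S) :
    0 ≤ bregman d d' x y := by
  have := hd.add_apply_sub_le_of_hasFDerivAt hdx hx hy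
  rw [bregman]
  linarith

theorem bregman_prox_step {S : Set E} {d ψ : E → ℝ} {d' : E → E →L[ℝ] ℝ} {g : E →L[ℝ] ℝ}
    {L : ℝ} {x xplus y : E} (hψ : ConvexOn ℝ S ψ) (hd : HasFDerivAt d (d' xplus) xplus)
    (hxplus : xplus ∈ S)
    (hmax : ∀ v ∈ S, (L • d' x - g) v - L * d v - ψ v ≤
      (L • d' x - g) xplus - L * d xplus - ψ xplus)
    (hy : y ∈ S) :
    L * bregman d d' xplus y + L * bregman d d' x xplus ≤
      L * bregman d d' x y + g (y - xplus) + (ψ y - ψ xplus) := by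
  have hmin : IsMinOn ((fun v => L * d v - (L • d' x - g) v) + ψ) S xplus := fun v hv => by
    simp only [mem_ofPred_eq, Pi.add_apply]
    linarith [hmax v hv]
  have hopt := hmin.hasFDerivAt_apply_sub_add_nonneg hψ
    ((hd.const_mul L).sub (L • d' x - g).hasFDerivAt) hxplus hy
  have h3 := bregman_three_point d d' x xplus y
  simp only [sub_apply, smul_apply, smul_eq_mul] at hopt h3
  linear_combination hopt - L * h3

theorem sum_mul_le_of_mem_stdSimplex {ι : Type*} [Fintype ι] {lam a : ι → ℝ} {b : ℝ}
    (hlam : lam ∈ stdSimplex ℝ ι) (hab : ∀ i, a i ≤ b) : ∑ i, lam i * a i ≤ b :=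
  calc ∑ i, lam i * a i ≤ ∑ i, lam i * b :=
        Finset.sum_le_sum fun i _ => mul_le_mul_of_nonneg_left (hab i) (hlam.1 i)
    _ = b := by rw [← Finset.sum_mul, hlam.2, one_mul]

theorem sum_sub_mul_le_of_forall_stdSimplex {ι : Type*} [Fintype ι] [DecidableEq ι]
    {lam w : ι → ℝ} {δ : ℝ} (h : ∀ ν ∈ stdSimplex ℝ ι, ∑ i, (lam i - ν i) * w i ≤ δ) (j : ι) :
    ∑ i, lam i * w i ≤ w j + δ := by
  have := h _ (ite_eq_mem_stdSimplex ℝ j)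
  simp only [sub_mul, Finset.sum_sub_distrib, ite_mul, one_mul, zero_mul,
    Finset.sum_ite_eq, Finset.mem_univ, if_true] at this
  linarith

theorem sum_smul_apply_sub_le_of_stationary {ι : Type*} [Fintype ι] {U : Set E}
    {f : E → ℝ} {f' : E → E →L[ℝ] ℝ} {z : ι → E} {lam : ι → ℝ} {x y : E} {δ : ℝ}
    (hf : ConvexOn ℝ U f) (hf' : ∀ i, HasFDerivAt f (f' (z i)) (z i)) (hz : ∀ i, z i ∈ U)
    (hy : y ∈ U) (hlam : lam ∈ stdSimplex ℝ ι)
    (hstat : ∀ ν ∈ stdSimplex ℝ ι,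
      ∑ i, (lam i - ν i) * ((f' (z i)) (z i) - f (z i) - (f' (z i)) x) ≤ δ) (j : ι) :
    (∑ i, lam i • f' (z i)) (y - x) ≤ f y - (f (z j) + f' (z j) (x - z j)) + δ := by
  classical
  have hvertex := sum_sub_mul_le_of_forall_stdSimplex hstat j
  have hlin : ∑ i, lam i * (f (z i) + f' (z i) (y - z i)) ≤ f y :=
    sum_mul_le_of_mem_stdSimplex hlam fun i =>
      hf.add_apply_sub_le_of_hasFDerivAt (hf' i) (hz i) hy
  have hsplit : (∑ i, lam i • f' (z i)) (y - x) = ∑ i, lam i * (f (z i) + f' (z i) (y - z i)) +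
      ∑ i, lam i * ((f' (z i)) (z i) - f (z i) - (f' (z i)) x) := by
    rw [sum_apply, ← Finset.sum_add_distrib]
    refine Finset.sum_congr rfl fun i _ => ?_
    simp only [smul_apply, smul_eq_mul, map_sub]
    ring
  rw [map_sub (f' (z j))]
  linarith

end

theorem gmm_th_Step_item1_general
    {E : Type*} [NormedAddCommGroup E] [NormedSpace ℝ E]
    -- `Sd = dom d`, `U = dom f` (open), `S = dom ψ`
    (Sd U S : Set E) (hSU : S ⊆ U) (hUSd : U ⊆ Sd)
    (d f ψ : E → ℝ) (d' f' : E → E →L[ℝ] ℝ)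
    (hdconv : StrictConvexOn ℝ Sd d)
    (hd' : ∀ x ∈ interior Sd, HasFDerivAt d (d' x) x)
    (hf' : ∀ x ∈ U, HasFDerivAt f (f' x) x)
    (hfconv : ConvexOn ℝ U f)
    (hψconv : ConvexOn ℝ S ψ)
    -- Bregman distance of `d`
    (β : E → E → ℝ) (hβ : ∀ x y, β x y = d y - d x - (d' x) (y - x))
    -- relative smoothness of `f` with constants `0 ≤ μ_d(f) ≤ L_d(f)`
    (μ Lf : ℝ)
    (hsmooth : ∀ x ∈ U, ∀ y ∈ U,
      μ * β x y ≤ f y - f x - (f' x) (y - x) ∧ f y - f x - (f' x) (y - x) ≤ Lf * β x y)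
    (L δ : ℝ) (hL0 : 0 < L) (hL : Lf ≤ L)
    -- the bundle `z₁, …, z_m ∈ dom ψ`, containing `x̄ ∈ int(dom ψ)`
    (m : ℕ) (z : Fin m → E) (hzS : ∀ i, z i ∈ S)
    (xbar : E) (hxbar : xbar ∈ interior S) (j : Fin m) (hj : z j = xbar)
    (lam : Fin m → ℝ) (hlam : lam ∈ stdSimplex ℝ (Fin m))
    -- `x₊ = y*_L(L∇d(x̄) − Gλ̄)`
    (xplus : E) (hxpS : xplus ∈ S) (hxpint : xplus ∈ interior Sd)
    (hxp : ∀ y ∈ S,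
      (L • d' xbar - ∑ i, lam i • f' (z i)) y - L * d y - ψ y ≤
      (L • d' xbar - ∑ i, lam i • f' (z i)) xplus - L * d xplus - ψ xplus)
    -- approximate stationarity: `⟨λ̄ − λ, f_* − Gᵀ x₊⟩ ≤ δ` for all `λ ∈ Δ_m`
    (hstat : ∀ ν ∈ stdSimplex ℝ (Fin m),
      ∑ i, (lam i - ν i) * ((f' (z i)) (z i) - f (z i) - (f' (z i)) xplus) ≤ δ) :
    ∀ y ∈ S,
      β xplus y ≤ β xbar y + (1 / L) * ((f y + ψ y) - (f xplus + ψ xplus) + δ) := by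
  intro y hy
  subst hj
  obtain rfl : β = bregman d d' := funext fun x => funext (hβ x)
  have hxS : z j ∈ S := interior_subset hxbar
  have hSSd : S ⊆ Sd := hSU.trans hUSd
  have hstep := bregman_prox_step hψconv (hd' xplus hxpint) hxpS hxp hy
  have hmodel := sum_smul_apply_sub_le_of_stationary hfconv (fun i => hf' _ (hSU (hzS i)))
    (fun i => hSU (hzS i)) (hSU hy) hlam hstat j
  have hupper := (hsmooth _ (hSU hxS) _ (hSU hxpS)).2
  have hLf : Lf * bregman d d' (z j) xplus ≤ L * bregman d d' (z j) xplus :=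
    mul_le_mul_of_nonneg_right hL <| bregman_nonneg hdconv.convexOn
      (hd' _ (interior_mono hSSd hxbar)) (hSSd hxS) (hSSd hxpS)
  rw [← mul_le_mul_iff_right₀ hL0, mul_add, ← mul_assoc, mul_one_div_cancel hL0.ne', one_mul]
  linarith

/-- Theorem `th-Step`, item 1, of "Gradient Methods with Memory".

One step of the Inexact Gradient Method with Memory with `L ≥ L_d(f)`:
for every `y ∈ dom ψ`, `β_d(x₊, y) ≤ β_d(x̄, y) + (1/L)[F(y) − F(x₊) + δ]`. -/
theorem gmm_th_Step_item1
    {E : Type*} [NormedAddCommGroup E] [NormedSpace ℝ E] [FiniteDimensional ℝ E]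
    -- `Sd = dom d`, `U = dom f` (open), `S = dom ψ`
    (Sd U S : Set E) (hSU : S ⊆ U) (hUSd : U ⊆ Sd) (hUopen : IsOpen U) (hSconv : Convex ℝ S)
    (d f ψ : E → ℝ) (d' f' : E → E →L[ℝ] ℝ)
    (hdconv : StrictConvexOn ℝ Sd d)
    (hd' : ∀ x ∈ interior Sd, HasFDerivAt d (d' x) x)
    (hf' : ∀ x ∈ U, HasFDerivAt f (f' x) x)
    (hfconv : ConvexOn ℝ U f)
    (hψconv : ConvexOn ℝ S ψ)
    -- Bregman distance of `d`
    (β : E → E → ℝ) (hβ : ∀ x y, β x y = d y - d x - (d' x) (y - x))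
    -- relative smoothness of `f` with constants `0 ≤ μ_d(f) ≤ L_d(f)`
    (μ Lf : ℝ) (hμ0 : 0 ≤ μ) (hμLf : μ ≤ Lf)
    (hsmooth : ∀ x ∈ U, ∀ y ∈ U,
      μ * β x y ≤ f y - f x - (f' x) (y - x) ∧ f y - f x - (f' x) (y - x) ≤ Lf * β x y)
    (L δ : ℝ) (hL0 : 0 < L) (hL : Lf ≤ L) (hδ : 0 ≤ δ)
    -- the bundle `z₁, …, z_m ∈ dom ψ`, containing `x̄ ∈ int(dom ψ)`
    (m : ℕ) (hm : 0 < m) (z : Fin m → E) (hzS : ∀ i, z i ∈ S)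
    (xbar : E) (hxbar : xbar ∈ interior S) (j : Fin m) (hj : z j = xbar)
    (lam : Fin m → ℝ) (hlam : lam ∈ stdSimplex ℝ (Fin m))
    -- `x₊ = y*_L(L∇d(x̄) − Gλ̄)`
    (xplus : E) (hxpS : xplus ∈ S) (hxpint : xplus ∈ interior Sd)
    (hxp : ∀ y ∈ S,
      (L • d' xbar - ∑ i, lam i • f' (z i)) y - L * d y - ψ y ≤
      (L • d' xbar - ∑ i, lam i • f' (z i)) xplus - L * d xplus - ψ xplus)
    -- approximate stationarity: `⟨λ̄ − λ, f_* − Gᵀ x₊⟩ ≤ δ` for all `λ ∈ Δ_m`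
    (hstat : ∀ ν ∈ stdSimplex ℝ (Fin m),
      ∑ i, (lam i - ν i) * ((f' (z i)) (z i) - f (z i) - (f' (z i)) xplus) ≤ δ) :
    ∀ y ∈ S,
      β xplus y ≤ β xbar y + (1 / L) * ((f y + ψ y) - (f xplus + ψ xplus) + δ) :=
  gmm_th_Step_item1_general Sd U S hSU hUSd d f ψ d' f' hdconv hd' hf' hfconv hψconv β hβ μ Lf
    hsmooth L δ hL0 hL m z hzS xbar hxbar j hj lam hlam xplus hxpS hxpint hxp hstat
end

section
/- Assume d is strongly convex with convexity parameter one, i.e. d(y) ≥ d(x) + ⟨∇d(x), y − x⟩ + ½‖y − x‖² for x ∈ int(dom d), y ∈ dom d. Then for any L > 0 the map s ↦ y*_L(s) is Lipschitz continuous: ‖y*_L(s_1) − y*_L(s_2)‖ ≤ (1/L)‖s_1 − s_2‖_* for all s_1, s_2 ∈ E*; consequently Φ_L is differentiable with ∇Φ_L(s) = y*_L(s) and ‖∇Φ_L(s_1) − ∇Φ_L(s_2)‖ ≤ (1/L)‖s_1 − s_2‖_*. -/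
/-!
The first-order optimality condition at the maximizer `y*(s)` is the variational inequality
`s (y - y*(s)) ≤ L d'(y*(s)) (y - y*(s)) + ψ y - ψ (y*(s))` on `dom ψ`. Adding the two instances at
`s₁` and `s₂` and using the strong monotonicity `‖y₁ - y₂‖² ≤ (d' y₁ - d' y₂)(y₁ - y₂)` that follows
from strong convexity gives `L ‖y₁ - y₂‖² ≤ (s₁ - s₂)(y₁ - y₂) ≤ ‖s₁ - s₂‖_* ‖y₁ - y₂‖`.
Since `Φ` is a maximum of affine functions of `s`, `y*(t)` is a subgradient of `Φ` at `t` for every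
`t`, and a convex function with a continuous choice of subgradients is differentiable.
-/

open Asymptotics Filter Set

section

variable {E : Type*} [NormedAddCommGroup E] [NormedSpace ℝ E]

theorem ConvexOn.le_add_smul_sub {S : Set E} {g : E → ℝ} (hg : ConvexOn ℝ S g) {x y : E}
    (hx : x ∈ S) (hy : y ∈ S) {t : ℝ} (ht : t ∈ Icc (0 : ℝ) 1) :
    g (x + t • (y - x)) ≤ g x + t * (g y - g x) := by
  have h := hg.2 hx hy (sub_nonneg.2 ht.2) ht.1 (sub_add_cancel 1 t)
  rw [show (1 - t) • x + t • y = x + t • (y - x) by module, smul_eq_mul, smul_eq_mul] at h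
  linarith

theorem IsMinOn.fderiv_add_sub_nonneg {S : Set E} (hS : Convex ℝ S) {f g : E → ℝ}
    {f' : E →L[ℝ] ℝ} {x y : E} (hf : HasFDerivAt f f' x) (hg : ConvexOn ℝ S g)
    (hmin : IsMinOn (f + g) S x) (hx : x ∈ S) (hy : y ∈ S) :
    0 ≤ f' (y - x) + (g y - g x) := by
  -- Replacing `g` by its chord along `[x, y]` keeps `x` a minimizer and makes the problem smooth.
  set φ : ℝ → ℝ := fun t => f (x + t • (y - x)) + t * (g y - g x)
  have hφmin : IsMinOn φ (Icc 0 1) 0 := by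
    intro t ht
    have hfg := hmin (hS.add_smul_sub_mem hx hy ht)
    have hgt := hg.le_add_smul_sub hx hy ht
    simp only [Pi.add_apply, mem_ofPred_eq, φ, zero_smul, add_zero, zero_mul] at hfg ⊢
    linarith
  have hline : HasDerivAt (fun t : ℝ => x + t • (y - x)) (y - x) 0 := by
    simpa using ((hasDerivAt_id (0 : ℝ)).smul_const (y - x)).const_add x
  have hφ : HasDerivAt φ (f' (y - x) + (g y - g x)) 0 := by
    have hf0 : HasFDerivAt f f' (x + (0 : ℝ) • (y - x)) := by simpa using hf
    exact (hf0.comp_hasDerivAt 0 hline).add ((hasDerivAt_id (0 : ℝ)).mul_const (g y - g x))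
      |>.congr_deriv (by simp)
  have hcone : (1 : ℝ) ∈ posTangentConeAt (Icc (0 : ℝ) 1) 0 :=
    mem_posTangentConeAt_of_segment_subset (by simp [segment_eq_Icc])
  simpa using hφmin.localize.hasFDerivWithinAt_nonneg hφ.hasDerivWithinAt.hasFDerivWithinAt hcone

theorem hasFDerivAt_of_subgradient_of_continuousAt {Φ : E → ℝ} {g : E → E →L[ℝ] ℝ} {s : E}
    (hsub : ∀ t u, Φ t + g t (u - t) ≤ Φ u) (hg : ContinuousAt g s) :
    HasFDerivAt Φ (g s) s := by
  have hbound : ∀ h, ‖Φ (s + h) - Φ s - g s h‖ ≤ ‖g (s + h) - g s‖ * ‖h‖ := by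
    intro h
    have lower := hsub s (s + h)
    have upper := hsub (s + h) s
    rw [add_sub_cancel_left] at lower
    rw [sub_add_cancel_left, map_neg] at upper
    have hdual : g (s + h) h - g s h ≤ ‖g (s + h) - g s‖ * ‖h‖ :=
      (le_abs_self _).trans ((g (s + h) - g s).le_opNorm h)
    rw [Real.norm_eq_abs, abs_le]
    constructor <;> nlinarith [norm_nonneg (g (s + h) - g s), norm_nonneg h]
  have hsmall : (fun h => ‖g (s + h) - g s‖) =o[nhds 0] (fun _ => (1 : ℝ)) := by
    have hshift : Tendsto (fun h => g (s + h)) (nhds 0) (nhds (g s)) :=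
      hg.tendsto.comp (by simpa using (continuous_const_add s).tendsto 0)
    simpa [isLittleO_one_iff] using (tendsto_sub_nhds_zero_iff.2 hshift).norm
  rw [hasFDerivAt_iff_isLittleO_nhds_zero]
  refine (isBigO_of_le _ fun h => (hbound h).trans (Real.le_norm_self _)).trans_isLittleO ?_
  exact isLittleO_norm_right.1
    (by simpa using hsmall.mul_isBigO (isBigO_refl (fun h : E => ‖h‖) _))

theorem norm_sub_le_of_strongConvex_of_optimality {d ψ : E → ℝ} {d' : E → E →L[ℝ] ℝ}
    {L : ℝ} (hL : 0 < L) {s₁ s₂ : E →L[ℝ] ℝ} {y₁ y₂ : E}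
    (hd₁₂ : d y₁ + d' y₁ (y₂ - y₁) + 1 / 2 * ‖y₂ - y₁‖ ^ 2 ≤ d y₂)
    (hd₂₁ : d y₂ + d' y₂ (y₁ - y₂) + 1 / 2 * ‖y₁ - y₂‖ ^ 2 ≤ d y₁)
    (hopt₁ : 0 ≤ (L • d' y₁ - s₁) (y₂ - y₁) + (ψ y₂ - ψ y₁))
    (hopt₂ : 0 ≤ (L • d' y₂ - s₂) (y₁ - y₂) + (ψ y₁ - ψ y₂)) :
    ‖y₁ - y₂‖ ≤ 1 / L * ‖s₁ - s₂‖ := by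
  have hneg : y₂ - y₁ = -(y₁ - y₂) := (neg_sub y₁ y₂).symm
  rw [hneg, norm_neg] at hd₁₂
  rw [hneg] at hopt₁
  simp only [map_neg, sub_apply, smul_apply, smul_eq_mul] at hd₁₂ hd₂₁ hopt₁ hopt₂
  have hmono : L * ‖y₁ - y₂‖ ^ 2 ≤ (s₁ - s₂) (y₁ - y₂) := by
    rw [sub_apply]
    nlinarith
  have hdual : (s₁ - s₂) (y₁ - y₂) ≤ ‖s₁ - s₂‖ * ‖y₁ - y₂‖ :=
    (le_abs_self _).trans ((s₁ - s₂).le_opNorm _)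
  rcases (norm_nonneg (y₁ - y₂)).eq_or_lt with h0 | hpos
  · rw [← h0]; positivity
  · rw [one_div, inv_mul_eq_div, le_div_iff₀ hL]
    nlinarith

end

theorem gmm_lm_Lip_general
    {E : Type*} [NormedAddCommGroup E] [NormedSpace ℝ E]
    -- `Sd = dom d`, `S = dom ψ`
    (Sd S : Set E) (hSSd : S ⊆ Sd) (hSconv : Convex ℝ S)
    (d ψ : E → ℝ) (d' : E → E →L[ℝ] ℝ)
    (hd' : ∀ x ∈ interior Sd, HasFDerivAt d (d' x) x)
    -- `d` is strongly convex with convexity parameter one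
    (hstrong : ∀ x ∈ interior Sd, ∀ y ∈ Sd,
      d x + (d' x) (y - x) + (1 / 2) * ‖y - x‖ ^ 2 ≤ d y)
    (hψconv : ConvexOn ℝ S ψ)
    (L : ℝ) (hL : 0 < L)
    -- `Φ = Φ_L` with maximizer `ystar = y*_L(·)`
    (Φ : (E →L[ℝ] ℝ) → ℝ) (ystar : (E →L[ℝ] ℝ) → E)
    (hy : ∀ s : E →L[ℝ] ℝ, ystar s ∈ S ∧ ystar s ∈ interior Sd ∧
      Φ s = s (ystar s) - L * d (ystar s) - ψ (ystar s) ∧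
      ∀ y ∈ S, s y - L * d y - ψ y ≤ Φ s) :
    (∀ s₁ s₂ : E →L[ℝ] ℝ, ‖ystar s₁ - ystar s₂‖ ≤ (1 / L) * ‖s₁ - s₂‖) ∧
    (∀ s : E →L[ℝ] ℝ, HasFDerivAt Φ (ContinuousLinearMap.apply ℝ ℝ (ystar s)) s) ∧
    (∀ s₁ s₂ : E →L[ℝ] ℝ,
      ‖ContinuousLinearMap.apply ℝ ℝ (ystar s₁) - ContinuousLinearMap.apply ℝ ℝ (ystar s₂)‖
        ≤ (1 / L) * ‖s₁ - s₂‖) := by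
  have hopt : ∀ s, ∀ y ∈ S, 0 ≤ (L • d' (ystar s) - s) (y - ystar s) + (ψ y - ψ (ystar s)) := by
    intro s y hyS
    obtain ⟨hS, hint, hΦ, hmax⟩ := hy s
    refine IsMinOn.fderiv_add_sub_nonneg hSconv (((hd' _ hint).const_smul L).sub s.hasFDerivAt)
      hψconv (fun z hz => ?_) hS hyS
    simp only [mem_ofPred_eq, Pi.add_apply, Pi.sub_apply, Pi.smul_apply, smul_eq_mul]
    linarith [hmax z hz]
  have hystar_lip : ∀ s₁ s₂, ‖ystar s₁ - ystar s₂‖ ≤ 1 / L * ‖s₁ - s₂‖ := fun s₁ s₂ =>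
    norm_sub_le_of_strongConvex_of_optimality hL
      (hstrong _ (hy s₁).2.1 _ (hSSd (hy s₂).1)) (hstrong _ (hy s₂).2.1 _ (hSSd (hy s₁).1))
      (hopt s₁ _ (hy s₂).1) (hopt s₂ _ (hy s₁).1)
  have hgrad_lip : ∀ s₁ s₂, ‖ContinuousLinearMap.apply ℝ ℝ (ystar s₁) -
      ContinuousLinearMap.apply ℝ ℝ (ystar s₂)‖ ≤ 1 / L * ‖s₁ - s₂‖ := fun s₁ s₂ => by
    rw [← map_sub]
    exact (NormedSpace.double_dual_bound ℝ E _).trans (hystar_lip s₁ s₂)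
  have hsub : ∀ t u, Φ t + ContinuousLinearMap.apply ℝ ℝ (ystar t) (u - t) ≤ Φ u := by
    intro t u
    obtain ⟨hS, -, hΦ, -⟩ := hy t
    have := (hy u).2.2.2 _ hS
    simp only [ContinuousLinearMap.apply_apply, sub_apply]
    linarith
  have hgrad_lipschitzWith :
      LipschitzWith (1 / L).toNNReal fun s => ContinuousLinearMap.apply ℝ ℝ (ystar s) :=
    LipschitzWith.of_dist_le' fun s₁ s₂ => by simpa only [dist_eq_norm] using hgrad_lip s₁ s₂
  exact ⟨hystar_lip, fun s => hasFDerivAt_of_subgradient_of_continuousAt hsub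
    hgrad_lipschitzWith.continuous.continuousAt, hgrad_lip⟩

/-- Lemma `lm-Lip` of "Gradient Methods with Memory".

If `d` is strongly convex with convexity parameter one, then for any `L > 0` the map
`s ↦ y*_L(s)` is `(1/L)`-Lipschitz from `(E*, ‖·‖_*)` to `(E, ‖·‖)`; consequently `Φ_L`
is differentiable with `∇Φ_L(s) = y*_L(s)` and `∇Φ_L` is `(1/L)`-Lipschitz. -/
theorem gmm_lm_Lip
    {E : Type*} [NormedAddCommGroup E] [NormedSpace ℝ E] [FiniteDimensional ℝ E]
    -- `Sd = dom d`, `S = dom ψ`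
    (Sd S : Set E) (hSSd : S ⊆ Sd) (hSconv : Convex ℝ S)
    (d ψ : E → ℝ) (d' : E → E →L[ℝ] ℝ)
    (hd' : ∀ x ∈ interior Sd, HasFDerivAt d (d' x) x)
    -- `d` is strongly convex with convexity parameter one
    (hstrong : ∀ x ∈ interior Sd, ∀ y ∈ Sd,
      d x + (d' x) (y - x) + (1 / 2) * ‖y - x‖ ^ 2 ≤ d y)
    (hψconv : ConvexOn ℝ S ψ)
    (L : ℝ) (hL : 0 < L)
    -- `Φ = Φ_L` with maximizer `ystar = y*_L(·)`
    (Φ : (E →L[ℝ] ℝ) → ℝ) (ystar : (E →L[ℝ] ℝ) → E)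
    (hy : ∀ s : E →L[ℝ] ℝ, ystar s ∈ S ∧ ystar s ∈ interior Sd ∧
      Φ s = s (ystar s) - L * d (ystar s) - ψ (ystar s) ∧
      ∀ y ∈ S, s y - L * d y - ψ y ≤ Φ s) :
    (∀ s₁ s₂ : E →L[ℝ] ℝ, ‖ystar s₁ - ystar s₂‖ ≤ (1 / L) * ‖s₁ - s₂‖) ∧
    (∀ s : E →L[ℝ] ℝ, HasFDerivAt Φ (ContinuousLinearMap.apply ℝ ℝ (ystar s)) s) ∧
    (∀ s₁ s₂ : E →L[ℝ] ℝ,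
      ‖ContinuousLinearMap.apply ℝ ℝ (ystar s₁) - ContinuousLinearMap.apply ℝ ℝ (ystar s₂)‖
        ≤ (1 / L) * ‖s₁ - s₂‖) :=
  gmm_lm_Lip_general Sd S hSSd hSconv d ψ d' hd' hstrong hψconv L hL Φ ystar hy
end

section
/- Assume d is strongly convex with convexity parameter one, i.e. d(y) ≥ d(x) + ⟨∇d(x), y − x⟩ + ½‖y − x‖² for x ∈ int(dom d), y ∈ dom d. Then the gradient of the anti-dual objective, given by ∇ξ_L(λ) = f_* − Gᵀ y*_L(L∇d(x̄) − Gλ), is Lipschitz continuous on Δ_m with respect to the ℓ₁-norm on arguments and ℓ∞-norm on gradients, with constant (1/L) max_{1≤i≤m} ‖g_i‖_*²: for all λ_1, λ_2 ∈ Δ_m, ‖∇ξ_L(λ_1) − ∇ξ_L(λ_2)‖_∞ ≤ (1/L) max_{1≤i≤m} ‖g_i‖_*² · ‖λ_1 − λ_2‖_1. -/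
/-!
The maximizer `y*(s)` of `s y - L d y - ψ y` over `dom ψ` is `1/L`-Lipschitz in `s` (dual norm):
adding the first-order optimality conditions at `y₁ = y*(s₁)` and `y₂ = y*(s₂)` to the two
strong-convexity inequalities for `d` gives `L ‖y₂ - y₁‖² ≤ (s₂ - s₁)(y₂ - y₁)`. Here
`s₂ - s₁ = ∑ⱼ (λ₁ - λ₂)ⱼ gⱼ`, so the `i`-th gradient coordinate moves by at most
`‖gᵢ‖ ‖y₂ - y₁‖ ≤ (1/L) ∑ⱼ |λ₁ - λ₂|ⱼ ‖gᵢ‖ ‖gⱼ‖`, and `‖gᵢ‖ ‖gⱼ‖ ≤ maxₖ ‖gₖ‖²`.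
-/

open Set Finset

section Prox

variable {E : Type*} [NormedAddCommGroup E] [NormedSpace ℝ E] {S : Set E}

theorem ConvexOn.fderiv_add_sub_nonneg_of_isMinOn {ψ F : E → ℝ} {F' : E →L[ℝ] ℝ} {y₀ y : E}
    (hS : Convex ℝ S) (hψ : ConvexOn ℝ S ψ) (hF : HasFDerivWithinAt F F' S y₀)
    (hmin : IsMinOn (F + ψ) S y₀) (hy₀ : y₀ ∈ S) (hy : y ∈ S) :
    0 ≤ F' (y - y₀) + (ψ y - ψ y₀) := by
  set v := y - y₀
  have hseg : MapsTo (fun t : ℝ => y₀ + t • v) (Icc 0 1) S := fun t ht =>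
    hS.segment_subset hy₀ hy (by rw [segment_eq_image']; exact ⟨t, ht, rfl⟩)
  -- along the segment, `ψ` lies below its chord, which turns the problem into a smooth one in `t`
  set k : ℝ → ℝ := fun t => F (y₀ + t • v) + t * (ψ y - ψ y₀)
  have hkmin : IsMinOn k (Icc 0 1) 0 := fun t ht => by
    have hchord : ψ (y₀ + t • v) ≤ ψ y₀ + t * (ψ y - ψ y₀) := by
      have hconv := hψ.2 hy₀ hy (sub_nonneg.2 ht.2) ht.1 (sub_add_cancel 1 t)
      have hpt : y₀ + t • v = (1 - t) • y₀ + t • y := by simp only [v]; module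
      simp only [smul_eq_mul] at hconv
      rw [hpt]
      linarith
    have := hmin (hseg ht)
    simp only [mem_ofPred_eq, Pi.add_apply] at this
    simp only [k, mem_ofPred_eq, zero_smul, add_zero, zero_mul]
    linarith
  have hk : HasDerivWithinAt k (F' v + (ψ y - ψ y₀)) (Icc 0 1) 0 := by
    have hline : HasDerivWithinAt (fun t : ℝ => y₀ + t • v) v (Icc 0 1) 0 :=
      ((hasDerivAt_id (0 : ℝ)).smul_const v |>.const_add y₀).hasDerivWithinAt.congr_deriv
        (one_smul ℝ v)
    have hF0 : HasFDerivWithinAt F F' S (y₀ + (0 : ℝ) • v) := by simpa using hF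
    have hsum := (hF0.comp_hasDerivWithinAt 0 hline hseg).add
      ((hasDerivAt_id (0 : ℝ)).hasDerivWithinAt.mul_const (ψ y - ψ y₀))
    rw [one_mul] at hsum
    exact hsum
  have hcone : (1 : ℝ) ∈ posTangentConeAt (Icc 0 1) 0 :=
    mem_posTangentConeAt_of_segment_subset (by simp [segment_eq_Icc])
  simpa using hkmin.localize.hasFDerivWithinAt_nonneg hk.hasFDerivWithinAt hcone

theorem apply_sub_sub_le_of_isMaxOn {ψ d : E → ℝ} {d₀ s : E →L[ℝ] ℝ} {L : ℝ} {y₀ y : E}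
    (hS : Convex ℝ S) (hψ : ConvexOn ℝ S ψ) (hd : HasFDerivWithinAt d d₀ S y₀)
    (hmax : IsMaxOn (fun y => s y - L * d y - ψ y) S y₀) (hy₀ : y₀ ∈ S) (hy : y ∈ S) :
    s (y - y₀) - (ψ y - ψ y₀) ≤ L * d₀ (y - y₀) := by
  have hmin : IsMinOn ((fun y => L * d y - s y) + ψ) S y₀ := fun x hx => by
    have := hmax hx
    simp only [mem_ofPred_eq, Pi.add_apply] at this ⊢
    linarith
  have := hψ.fderiv_add_sub_nonneg_of_isMinOn hS ((hd.const_mul L).sub s.hasFDerivWithinAt)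
    hmin hy₀ hy
  simp only [sub_apply, smul_apply, smul_eq_mul] at this
  linarith

theorem mul_norm_sub_sq_le_of_isMaxOn {ψ d : E → ℝ} {d₁ d₂ s₁ s₂ : E →L[ℝ] ℝ} {L : ℝ}
    {y₁ y₂ : E} (hS : Convex ℝ S) (hψ : ConvexOn ℝ S ψ) (hL : 0 ≤ L)
    (hd₁ : HasFDerivWithinAt d d₁ S y₁) (hd₂ : HasFDerivWithinAt d d₂ S y₂)
    (hstrong₁ : d y₁ + d₁ (y₂ - y₁) + (1 / 2) * ‖y₂ - y₁‖ ^ 2 ≤ d y₂)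
    (hstrong₂ : d y₂ + d₂ (y₁ - y₂) + (1 / 2) * ‖y₁ - y₂‖ ^ 2 ≤ d y₁)
    (hmax₁ : IsMaxOn (fun y => s₁ y - L * d y - ψ y) S y₁)
    (hmax₂ : IsMaxOn (fun y => s₂ y - L * d y - ψ y) S y₂) (hy₁ : y₁ ∈ S) (hy₂ : y₂ ∈ S) :
    L * ‖y₂ - y₁‖ ^ 2 ≤ (s₂ - s₁) (y₂ - y₁) := by
  have hopt₁ := apply_sub_sub_le_of_isMaxOn hS hψ hd₁ hmax₁ hy₁ hy₂
  have hopt₂ := apply_sub_sub_le_of_isMaxOn hS hψ hd₂ hmax₂ hy₂ hy₁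
  have hstrong : d₁ (y₂ - y₁) + d₂ (y₁ - y₂) + ‖y₂ - y₁‖ ^ 2 ≤ 0 := by
    rw [norm_sub_rev] at hstrong₂
    linarith
  have hs : (s₂ - s₁) (y₂ - y₁) = -s₁ (y₂ - y₁) - s₂ (y₁ - y₂) := by
    simp only [sub_apply, map_sub]
    ring
  rw [hs]
  nlinarith [mul_le_mul_of_nonneg_left hstrong hL]

theorem norm_le_opNorm_div_of_mul_norm_sq_le {L : ℝ} {φ : E →L[ℝ] ℝ} {v : E} (hL : 0 < L)
    (h : L * ‖v‖ ^ 2 ≤ φ v) : ‖v‖ ≤ ‖φ‖ / L := by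
  rw [le_div_iff₀ hL]
  rcases (norm_nonneg v).eq_or_lt with hv | hv
  · rw [← hv, zero_mul]
    exact norm_nonneg φ
  · have := h.trans ((le_abs_self _).trans (φ.le_opNorm v))
    nlinarith

end Prox

theorem norm_mul_norm_sum_smul_le {ι F : Type*} [Fintype ι] [SeminormedAddCommGroup F]
    [NormedSpace ℝ F] (g : ι → F) (μ : ι → ℝ) (i : ι) :
    ‖g i‖ * ‖∑ j, μ j • g j‖ ≤ (⨆ k, ‖g k‖ ^ 2) * ∑ j, |μ j| := by
  have hbdd : BddAbove (range fun k => ‖g k‖ ^ 2) := (finite_range _).bddAbove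
  have hprod : ∀ j, ‖g i‖ * ‖g j‖ ≤ ⨆ k, ‖g k‖ ^ 2 := fun j => by
    nlinarith [two_mul_le_add_sq ‖g i‖ ‖g j‖, le_ciSup hbdd i, le_ciSup hbdd j]
  calc ‖g i‖ * ‖∑ j, μ j • g j‖
      ≤ ‖g i‖ * ∑ j, |μ j| * ‖g j‖ := by
        gcongr
        exact (norm_sum_le _ _).trans_eq (by simp only [norm_smul, Real.norm_eq_abs])
    _ = ∑ j, |μ j| * (‖g i‖ * ‖g j‖) := by
        rw [mul_sum]
        exact sum_congr rfl fun j _ => by ring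
    _ ≤ ∑ j, |μ j| * ⨆ k, ‖g k‖ ^ 2 := by
        gcongr with j
        exact hprod j
    _ = (⨆ k, ‖g k‖ ^ 2) * ∑ j, |μ j| := by rw [← sum_mul, mul_comm]

theorem gmm_def_LipGX_general
    {E : Type*} [NormedAddCommGroup E] [NormedSpace ℝ E]
    -- `Sd = dom d`, `S = dom ψ`
    (Sd S : Set E) (hSSd : S ⊆ Sd) (hSconv : Convex ℝ S)
    (d ψ : E → ℝ) (d' : E → E →L[ℝ] ℝ)
    (hd' : ∀ x ∈ interior Sd, HasFDerivAt d (d' x) x)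
    -- `d` is strongly convex with convexity parameter one
    (hstrong : ∀ x ∈ interior Sd, ∀ y ∈ Sd,
      d x + (d' x) (y - x) + (1 / 2) * ‖y - x‖ ^ 2 ≤ d y)
    (hψconv : ConvexOn ℝ S ψ)
    (L : ℝ) (hL : 0 < L)
    -- `ystar = y*_L(·)`, the maximizer defining `Φ_L`
    (ystar : (E →L[ℝ] ℝ) → E)
    (hy : ∀ s : E →L[ℝ] ℝ, ystar s ∈ S ∧ ystar s ∈ interior Sd ∧
      ∀ y ∈ S, s y - L * d y - ψ y ≤ s (ystar s) - L * d (ystar s) - ψ (ystar s))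
    -- the bundle data: `f_i = f(z_i)`, `g_i = ∇f(z_i)`
    (m : ℕ)
    (f : E → ℝ) (f' : E → E →L[ℝ] ℝ)
    (z : Fin m → E)
    (xbar : E) :
    ∀ lam₁ ∈ stdSimplex ℝ (Fin m), ∀ lam₂ ∈ stdSimplex ℝ (Fin m),
      (⨆ i : Fin m,
        |((f' (z i)) (z i) - f (z i)
            - (f' (z i)) (ystar (L • d' xbar - ∑ j, lam₁ j • f' (z j)))) -
          ((f' (z i)) (z i) - f (z i)
            - (f' (z i)) (ystar (L • d' xbar - ∑ j, lam₂ j • f' (z j))))|) ≤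
      (1 / L) * (⨆ i : Fin m, ‖f' (z i)‖ ^ 2) * ∑ i, |lam₁ i - lam₂ i| := by
  intro lam₁ _ lam₂ _
  set s₁ := L • d' xbar - ∑ j, lam₁ j • f' (z j)
  set s₂ := L • d' xbar - ∑ j, lam₂ j • f' (z j)
  obtain ⟨hy₁S, hy₁int, hmax₁⟩ := hy s₁
  obtain ⟨hy₂S, hy₂int, hmax₂⟩ := hy s₂
  have hs : s₂ - s₁ = ∑ j, (lam₁ j - lam₂ j) • f' (z j) := by
    simp only [s₁, s₂, sub_sub_sub_cancel_left, ← Finset.sum_sub_distrib]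
    exact sum_congr rfl fun j _ => (sub_smul ..).symm
  have hlip : ‖ystar s₂ - ystar s₁‖ ≤ ‖s₂ - s₁‖ / L :=
    norm_le_opNorm_div_of_mul_norm_sq_le hL <|
      mul_norm_sub_sq_le_of_isMaxOn hSconv hψconv hL.le (hd' _ hy₁int).hasFDerivWithinAt
        (hd' _ hy₂int).hasFDerivWithinAt (hstrong _ hy₁int _ (hSSd hy₂S))
        (hstrong _ hy₂int _ (hSSd hy₁S)) hmax₁ hmax₂ hy₁S hy₂S
  have hM : 0 ≤ ⨆ i, ‖f' (z i)‖ ^ 2 := Real.iSup_nonneg fun i => by positivity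
  refine Real.iSup_le (fun i => ?_) (by positivity)
  calc _ = |f' (z i) (ystar s₂ - ystar s₁)| := by rw [map_sub]; ring_nf
    _ ≤ ‖f' (z i)‖ * ‖ystar s₂ - ystar s₁‖ := (f' (z i)).le_opNorm _
    _ ≤ ‖f' (z i)‖ * (‖s₂ - s₁‖ / L) := by gcongr
    _ = (1 / L) * (‖f' (z i)‖ * ‖∑ j, (lam₁ j - lam₂ j) • f' (z j)‖) := by rw [hs]; ring
    _ ≤ (1 / L) * ((⨆ k, ‖f' (z k)‖ ^ 2) * ∑ j, |lam₁ j - lam₂ j|) := by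
        exact mul_le_mul_of_nonneg_left
          (norm_mul_norm_sum_smul_le (fun j => f' (z j)) (fun j => lam₁ j - lam₂ j) i)
          (by positivity)
    _ = _ := (mul_assoc ..).symm

/-- eq. `def-LipGX` of "Gradient Methods with Memory".

If `d` is strongly convex with convexity parameter one, then the gradient of the anti-dual
objective, `∇ξ_L(λ) = f_* − Gᵀ y*_L(L∇d(x̄) − Gλ)`, is Lipschitz continuous on `Δ_m`
(ℓ₁-norm on arguments, ℓ∞-norm on gradients) with constant `(1/L) max_i ‖g_i‖_*²`. -/
theorem gmm_def_LipGX
    {E : Type*} [NormedAddCommGroup E] [NormedSpace ℝ E] [FiniteDimensional ℝ E]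
    -- `Sd = dom d`, `S = dom ψ`
    (Sd S : Set E) (hSSd : S ⊆ Sd) (hSconv : Convex ℝ S)
    (d ψ : E → ℝ) (d' : E → E →L[ℝ] ℝ)
    (hd' : ∀ x ∈ interior Sd, HasFDerivAt d (d' x) x)
    -- `d` is strongly convex with convexity parameter one
    (hstrong : ∀ x ∈ interior Sd, ∀ y ∈ Sd,
      d x + (d' x) (y - x) + (1 / 2) * ‖y - x‖ ^ 2 ≤ d y)
    (hψconv : ConvexOn ℝ S ψ)
    (L : ℝ) (hL : 0 < L)
    -- `ystar = y*_L(·)`, the maximizer defining `Φ_L`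
    (ystar : (E →L[ℝ] ℝ) → E)
    (hy : ∀ s : E →L[ℝ] ℝ, ystar s ∈ S ∧ ystar s ∈ interior Sd ∧
      ∀ y ∈ S, s y - L * d y - ψ y ≤ s (ystar s) - L * d (ystar s) - ψ (ystar s))
    -- the bundle data: `f_i = f(z_i)`, `g_i = ∇f(z_i)`
    (m : ℕ) (hm : 0 < m)
    (f : E → ℝ) (f' : E → E →L[ℝ] ℝ) (hf' : ∀ x : E, HasFDerivAt f (f' x) x)
    (hfconv : ConvexOn ℝ Set.univ f)
    (z : Fin m → E) (hzS : ∀ i, z i ∈ S)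
    (xbar : E) (hxbar : xbar ∈ interior S) :
    ∀ lam₁ ∈ stdSimplex ℝ (Fin m), ∀ lam₂ ∈ stdSimplex ℝ (Fin m),
      (⨆ i : Fin m,
        |((f' (z i)) (z i) - f (z i)
            - (f' (z i)) (ystar (L • d' xbar - ∑ j, lam₁ j • f' (z j)))) -
          ((f' (z i)) (z i) - f (z i)
            - (f' (z i)) (ystar (L • d' xbar - ∑ j, lam₂ j • f' (z j))))|) ≤
      (1 / L) * (⨆ i : Fin m, ‖f' (z i)‖ ^ 2) * ∑ i, |lam₁ i - lam₂ i| :=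
  gmm_def_LipGX_general Sd S hSSd hSconv d ψ d' hd' hstrong hψconv L hL ystar hy m f f' z xbar
end
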